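/- arXiv:2003.00966 — 3 statements merged into one kernel-verified Lean document; each statement's English description precedes it below -/
import Mathlib

section
/- For each $k \in \mathbb{N}$ there is a constant $C_k > 0$ such that for all $f \in C_b^{k+1}(\mathbb{R}^n)$: $\max_{|\beta|=k} \|\partial_x^{\beta} f\|_{C^0_b(\mathbb{R}^n)} \leq C_k \|f\|_{C^0_b(\mathbb{R}^n)}^{\frac{1}{k+1}} \big( \max_{|\alpha|=k+1} \|\partial_x^{\alpha} f\|_{C^0_b(\mathbb{R}^n)} \big)^{\frac{k}{k+1}}$. -/
noncomputable section
open MeasureTheory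

abbrev V (n : ℕ) := EuclideanSpace ℝ (Fin n)

noncomputable def pd (n k : ℕ) {E : Type*} [NormedAddCommGroup E] [NormedSpace ℝ E]
    (d : Fin k → Fin n) (f : V n → E) (x : V n) : E :=
  iteratedFDeriv ℝ k f x (fun i => EuclideanSpace.single (d i) 1)

noncomputable def cbNorm (n k : ℕ) {E : Type*} [NormedAddCommGroup E] [NormedSpace ℝ E]
    (f : V n → E) : ℝ :=
  ⨆ i : Fin (k+1), ⨆ x : V n, ‖iteratedFDeriv ℝ i f x‖

noncomputable def hSemi (n i : ℕ) (τ : ℝ) {E : Type*} [NormedAddCommGroup E] [NormedSpace ℝ E]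
    (f : V n → E) : ℝ :=
  ⨆ p : V n × V n, ‖iteratedFDeriv ℝ i f p.1 - iteratedFDeriv ℝ i f p.2‖ / ‖p.1 - p.2‖ ^ τ

noncomputable def hNorm (n m : ℕ) (τ : ℝ) {E : Type*} [NormedAddCommGroup E] [NormedSpace ℝ E]
    (f : V n → E) : ℝ :=
  cbNorm n m f + ⨆ i : Fin (m+1), hSemi n i τ f

def MemHold (n m : ℕ) (τ : ℝ) {E : Type*} [NormedAddCommGroup E] [NormedSpace ℝ E]
    (f : V n → E) : Prop :=
  ContDiff ℝ m f ∧ ∃ C : ℝ, ∀ i ≤ m, (∀ x, ‖iteratedFDeriv ℝ i f x‖ ≤ C) ∧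
    ∀ x y : V n, ‖iteratedFDeriv ℝ i f x - iteratedFDeriv ℝ i f y‖ ≤ C * ‖x - y‖ ^ τ

/-!
Write `a j` for the largest sup norm of a `j`-th order partial derivative of `f`. On the line,
a first-order Taylor bound with step `h`, optimized over `h`, gives Landau's inequality
`‖g'‖² ≤ 8 ‖g‖ ‖g''‖`; applied to the `j`-th order partials along the coordinate lines it gives
the log-convexity `a (j + 1) ^ 2 ≤ 8 * a j * a (j + 2)`. Telescoping it yields
`a k ^ (k + 1) ≤ 8 ^ (k + 1).choose 2 * a 0 * a (k + 1) ^ k`, and taking `(k + 1)`-th roots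
gives the theorem.
-/

open Set

section OneVariable

variable {E : Type*} [NormedAddCommGroup E] [NormedSpace ℝ E] {g g' g'' : ℝ → E}

theorem norm_sub_sub_smul_le_of_hasDerivAt {M : ℝ} (hg : ∀ t, HasDerivAt g (g' t) t)
    (hg' : ∀ t, HasDerivAt g' (g'' t) t) (hM : ∀ t, ‖g'' t‖ ≤ M) (t h : ℝ) :
    ‖g (t + h) - g t - h • g' t‖ ≤ M * h ^ 2 := by
  have hφ : ∀ s, HasDerivAt (fun s => g s - s • g' t) (g' s - g' t) s := fun s => by
    simpa only [one_smul] using (hg s).fun_sub ((hasDerivAt_id' s).smul_const (g' t))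
  have hbound : ∀ s ∈ uIcc t (t + h), ‖g' s - g' t‖ ≤ M * |h| := fun s hs =>
    calc ‖g' s - g' t‖ ≤ M * ‖s - t‖ :=
          convex_univ.norm_image_sub_le_of_norm_hasDerivWithin_le
            (fun s _ => (hg' s).hasDerivWithinAt) (fun s _ => hM s) trivial trivial
      _ ≤ M * |h| := by
          have := abs_sub_left_of_mem_uIcc hs
          rw [add_sub_cancel_left] at this
          exact mul_le_mul_of_nonneg_left this ((norm_nonneg _).trans (hM 0))
  have := (convex_uIcc t (t + h)).norm_image_sub_le_of_norm_hasDerivWithin_le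
    (fun s _ => (hφ s).hasDerivWithinAt) hbound left_mem_uIcc right_mem_uIcc
  calc ‖g (t + h) - g t - h • g' t‖ = ‖(g (t + h) - (t + h) • g' t) - (g t - t • g' t)‖ := by
        rw [add_smul]; congr 1; abel
    _ ≤ M * |h| * ‖t + h - t‖ := this
    _ = M * h ^ 2 := by rw [add_sub_cancel_left, Real.norm_eq_abs, mul_assoc, abs_mul_abs_self, sq]

theorem sq_le_four_mul_of_le_div_add_mul {x a b : ℝ} (hx : 0 ≤ x) (ha : 0 ≤ a) (hb : 0 ≤ b)
    (H : ∀ h > 0, x ≤ a / h + b * h) : x ^ 2 ≤ 4 * a * b := by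
  rcases hx.eq_or_lt with rfl | hx
  · rw [zero_pow two_ne_zero]; positivity
  rcases hb.eq_or_lt with rfl | hb
  · have hH := H ((a + 1) / x) (by positivity)
    rw [zero_mul, add_zero, div_div_eq_mul_div, le_div_iff₀ (by positivity)] at hH
    nlinarith
  · have hH := H (x / (2 * b)) (by positivity)
    rw [show b * (x / (2 * b)) = x / 2 by field_simp, div_div_eq_mul_div] at hH
    have hhalf : x / 2 ≤ a * (2 * b) / x := by linarith
    rw [le_div_iff₀ hx] at hhalf
    nlinarith

theorem norm_deriv_sq_le_of_hasDerivAt {M₀ M₂ : ℝ} (hg : ∀ t, HasDerivAt g (g' t) t)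
    (hg' : ∀ t, HasDerivAt g' (g'' t) t) (hM₀ : ∀ t, ‖g t‖ ≤ M₀) (hM₂ : ∀ t, ‖g'' t‖ ≤ M₂)
    (t : ℝ) : ‖g' t‖ ^ 2 ≤ 8 * M₀ * M₂ := by
  have hM₀0 : 0 ≤ M₀ := (norm_nonneg _).trans (hM₀ 0)
  have hM₂0 : 0 ≤ M₂ := (norm_nonneg _).trans (hM₂ 0)
  suffices ∀ h > 0, ‖g' t‖ ≤ 2 * M₀ / h + M₂ * h by
    linarith [sq_le_four_mul_of_le_div_add_mul (norm_nonneg _) (by positivity) hM₂0 this]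
  intro h hh
  have hsmul : h * ‖g' t‖ ≤ 2 * M₀ + M₂ * h ^ 2 :=
    calc h * ‖g' t‖ = ‖(g (t + h) - g t) - (g (t + h) - g t - h • g' t)‖ := by
          rw [sub_sub_cancel, norm_smul, Real.norm_of_nonneg hh.le]
      _ ≤ (‖g (t + h)‖ + ‖g t‖) + M₂ * h ^ 2 :=
          (norm_sub_le _ _).trans (add_le_add (norm_sub_le _ _)
            (norm_sub_sub_smul_le_of_hasDerivAt hg hg' hM₂ t h))
      _ ≤ 2 * M₀ + M₂ * h ^ 2 := by linarith [hM₀ (t + h), hM₀ t]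
  rw [div_add' _ _ _ hh.ne', le_div_iff₀ hh]
  nlinarith

end OneVariable

theorem pow_succ_le_of_sq_le_mul {a : ℕ → ℝ} {c : ℝ} (hc : 0 ≤ c) (ha : ∀ j, 0 ≤ a j) :
    ∀ {k : ℕ}, (∀ i, i + 1 ≤ k → a (i + 1) ^ 2 ≤ c * a i * a (i + 2)) →
      a k ^ (k + 1) ≤ c ^ (k + 1).choose 2 * a 0 * a (k + 1) ^ k
  | 0, _ => by simp
  | m + 1, h => by
    have ih := pow_succ_le_of_sq_le_mul hc ha (k := m) fun i hi => h i (by omega)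
    have hrhs : 0 ≤ c ^ (m + 2).choose 2 * a 0 * a (m + 2) ^ (m + 1) := by
      have := ha 0; have := ha (m + 2); positivity
    rcases (ha (m + 1)).eq_or_lt with hzero | hpos
    · rwa [← hzero, zero_pow (by omega)]
    refine le_of_mul_le_mul_right ?_ (pow_pos hpos m)
    calc a (m + 1) ^ (m + 2) * a (m + 1) ^ m = (a (m + 1) ^ 2) ^ (m + 1) := by ring
      _ ≤ (c * a m * a (m + 2)) ^ (m + 1) := pow_le_pow_left₀ (sq_nonneg _) (h m le_rfl) _
      _ = c ^ (m + 1) * a m ^ (m + 1) * a (m + 2) ^ (m + 1) := by ring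
      _ ≤ c ^ (m + 1) * (c ^ (m + 1).choose 2 * a 0 * a (m + 1) ^ m) * a (m + 2) ^ (m + 1) := by
          have := ha (m + 2); gcongr
      _ = c ^ (m + 2).choose 2 * a 0 * a (m + 2) ^ (m + 1) * a (m + 1) ^ m := by
          rw [show (m + 2).choose 2 = (m + 1) + (m + 1).choose 2 by
            rw [Nat.choose_succ_succ', Nat.choose_one_right], pow_add]
          ring

theorem le_rpow_mul_rpow_of_pow_succ_le {x y z C : ℝ} {k : ℕ} (hx : 0 ≤ x) (hy : 0 ≤ y)
    (hz : 0 ≤ z) (hC : 0 ≤ C) (h : x ^ (k + 1) ≤ C * y * z ^ k) :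
    x ≤ C ^ ((1 : ℝ) / (k + 1)) * y ^ ((1 : ℝ) / (k + 1)) * z ^ ((k : ℝ) / (k + 1)) :=
  calc x = (x ^ (k + 1)) ^ ((1 : ℝ) / (k + 1)) := by
        rw [← Real.rpow_natCast, ← Real.rpow_mul hx]; push_cast; field_simp; simp
    _ ≤ (C * y * z ^ k) ^ ((1 : ℝ) / (k + 1)) := by gcongr
    _ = C ^ ((1 : ℝ) / (k + 1)) * y ^ ((1 : ℝ) / (k + 1)) * z ^ ((k : ℝ) / (k + 1)) := by
        rw [Real.mul_rpow (by positivity) (by positivity), Real.mul_rpow hC hy,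
          ← Real.rpow_natCast z k, ← Real.rpow_mul hz, mul_one_div]

section Partials

variable {n : ℕ} {E : Type*} [NormedAddCommGroup E] [NormedSpace ℝ E] {f : V n → E}

theorem hasDerivAt_pd_add_smul_single {j : ℕ} (hf : ContDiff ℝ (j + 1) f) (e : Fin n)
    (d : Fin j → Fin n) (x : V n) (t : ℝ) :
    HasDerivAt (fun s : ℝ => pd n j d f (x + s • EuclideanSpace.single e 1))
      (pd n (j + 1) (Fin.cons e d) f (x + t • EuclideanSpace.single e 1)) t := by
  set v : V n := EuclideanSpace.single e 1
  set w : Fin j → V n := fun i => EuclideanSpace.single (d i) 1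
  have hline : HasDerivAt (fun s : ℝ => x + s • v) v t := by
    simpa using ((hasDerivAt_id t).smul_const v).const_add x
  have hD := (hf.differentiable_iteratedFDeriv (by exact_mod_cast lt_add_one j)
    (x + t • v)).hasFDerivAt.comp_hasDerivAt t hline
  have hcons : (fun i => EuclideanSpace.single ((Fin.cons e d : Fin (j + 1) → Fin n) i) 1)
      = (Fin.cons v w : Fin (j + 1) → V n) := by
    funext i
    refine Fin.cases ?_ ?_ i <;> simp [v, w]
  rw [pd, hcons, iteratedFDeriv_succ_apply_left, Fin.cons_zero, Fin.tail_cons]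
  exact (ContinuousMultilinearMap.apply ℝ (fun _ : Fin j => V n) E w).hasFDerivAt.comp_hasDerivAt
    t hD

theorem norm_pd_le_norm_iteratedFDeriv {j : ℕ} (d : Fin j → Fin n) (x : V n) :
    ‖pd n j d f x‖ ≤ ‖iteratedFDeriv ℝ j f x‖ := by
  simpa [pd] using (iteratedFDeriv ℝ j f x).le_opNorm fun i => EuclideanSpace.single (d i) 1

variable (n) in
def maxPartialNorm (j : ℕ) (f : V n → E) : ℝ :=
  ⨆ d : Fin j → Fin n, ⨆ x : V n, ‖pd n j d f x‖

theorem maxPartialNorm_nonneg {j : ℕ} : 0 ≤ maxPartialNorm n j f :=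
  Real.iSup_nonneg fun _ => Real.iSup_nonneg fun _ => norm_nonneg _

theorem maxPartialNorm_zero : maxPartialNorm n 0 f = ⨆ x : V n, ‖f x‖ := by
  simp only [maxPartialNorm, pd, iteratedFDeriv_zero_apply, ciSup_const]

theorem iSup_norm_pd_le_maxPartialNorm {j : ℕ} (d : Fin j → Fin n) :
    ⨆ x : V n, ‖pd n j d f x‖ ≤ maxPartialNorm n j f :=
  le_ciSup (f := fun d => ⨆ x : V n, ‖pd n j d f x‖) (finite_range _).bddAbove d

theorem norm_pd_le_maxPartialNorm {j : ℕ}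
    (hf : BddAbove (range fun x => ‖iteratedFDeriv ℝ j f x‖)) (d : Fin j → Fin n) (x : V n) :
    ‖pd n j d f x‖ ≤ maxPartialNorm n j f := by
  obtain ⟨A, hA⟩ := hf
  have hbdd : BddAbove (range fun x => ‖pd n j d f x‖) :=
    ⟨A, by rintro _ ⟨y, rfl⟩; exact (norm_pd_le_norm_iteratedFDeriv d y).trans (hA ⟨y, rfl⟩)⟩
  exact (le_ciSup hbdd x).trans (iSup_norm_pd_le_maxPartialNorm d)

theorem maxPartialNorm_succ_sq_le {i : ℕ} (hf : ContDiff ℝ (i + 2) f)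
    (h₀ : BddAbove (range fun x => ‖iteratedFDeriv ℝ i f x‖))
    (h₂ : BddAbove (range fun x => ‖iteratedFDeriv ℝ (i + 2) f x‖)) :
    maxPartialNorm n (i + 1) f ^ 2 ≤ 8 * maxPartialNorm n i f * maxPartialNorm n (i + 2) f := by
  have hM : 0 ≤ 8 * maxPartialNorm n i f * maxPartialNorm n (i + 2) f := by
    have := maxPartialNorm_nonneg (f := f) (j := i)
    have := maxPartialNorm_nonneg (f := f) (j := i + 2)
    positivity
  have hpt : ∀ (d : Fin (i + 1) → Fin n) (x : V n),
      ‖pd n (i + 1) d f x‖ ≤ √(8 * maxPartialNorm n i f * maxPartialNorm n (i + 2) f) := by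
    intro d x
    refine Real.le_sqrt_of_sq_le ?_
    have hg : ∀ s : ℝ, HasDerivAt
        (fun s : ℝ => pd n i (Fin.tail d) f (x + s • EuclideanSpace.single (d 0) 1))
        (pd n (i + 1) d f (x + s • EuclideanSpace.single (d 0) 1)) s := fun s => by
      simpa only [Fin.cons_self_tail] using
        hasDerivAt_pd_add_smul_single (hf.of_le (by norm_cast; omega)) (d 0) (Fin.tail d) x s
    simpa using norm_deriv_sq_le_of_hasDerivAt hg
      (fun s => hasDerivAt_pd_add_smul_single (by exact_mod_cast hf) (d 0) d x s)
      (fun _ => norm_pd_le_maxPartialNorm h₀ _ _) (fun _ => norm_pd_le_maxPartialNorm h₂ _ _) 0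
  have hsup :
      maxPartialNorm n (i + 1) f ≤ √(8 * maxPartialNorm n i f * maxPartialNorm n (i + 2) f) :=
    Real.iSup_le (fun d => Real.iSup_le (hpt d) (Real.sqrt_nonneg _)) (Real.sqrt_nonneg _)
  calc maxPartialNorm n (i + 1) f ^ 2
      ≤ √(8 * maxPartialNorm n i f * maxPartialNorm n (i + 2) f) ^ 2 :=
        pow_le_pow_left₀ maxPartialNorm_nonneg hsup 2
    _ = 8 * maxPartialNorm n i f * maxPartialNorm n (i + 2) f := Real.sq_sqrt hM

end Partials

theorem stmt3_general (n k : ℕ) :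
    ∃ C > 0, ∀ f : V n → ℂ, ContDiff ℝ (k+1) f →
      (∃ A : ℝ, ∀ i ≤ k+1, ∀ x, ‖iteratedFDeriv ℝ i f x‖ ≤ A) →
      ∀ d : Fin k → Fin n,
        (⨆ x : V n, ‖pd n k d f x‖) ≤
          C * (⨆ x : V n, ‖f x‖) ^ ((1 : ℝ)/(k+1)) *
            (⨆ b : Fin (k+1) → Fin n, ⨆ x : V n, ‖pd n (k+1) b f x‖) ^ ((k : ℝ)/(k+1)) := by
  refine ⟨(8 ^ (k + 1).choose 2 : ℝ) ^ ((1 : ℝ) / (k + 1)), by positivity, ?_⟩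
  rintro f hf ⟨A, hA⟩ d
  have hbdd : ∀ j ≤ k + 1, BddAbove (range fun x => ‖iteratedFDeriv ℝ j f x‖) :=
    fun j hj => ⟨A, by rintro _ ⟨x, rfl⟩; exact hA j hj x⟩
  have hchain := pow_succ_le_of_sq_le_mul (a := fun j => maxPartialNorm n j f) (by norm_num)
    (fun _ => maxPartialNorm_nonneg) (k := k) fun i hi =>
      maxPartialNorm_succ_sq_le (hf.of_le (by norm_cast; omega)) (hbdd i (by omega))
        (hbdd (i + 2) (by omega))
  rw [← maxPartialNorm_zero (f := f)]
  exact (iSup_norm_pd_le_maxPartialNorm d).trans <| le_rpow_mul_rpow_of_pow_succ_le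
    maxPartialNorm_nonneg maxPartialNorm_nonneg maxPartialNorm_nonneg (by positivity) hchain

/-- Landau–Kolmogorov type interpolation inequality for intermediate
derivatives in the sup norm. -/
theorem stmt3 (n k : ℕ) (hk : 1 ≤ k) :
    ∃ C > 0, ∀ f : V n → ℂ, ContDiff ℝ (k+1) f →
      (∃ A : ℝ, ∀ i ≤ k+1, ∀ x, ‖iteratedFDeriv ℝ i f x‖ ≤ A) →
      ∀ d : Fin k → Fin n,
        (⨆ x : V n, ‖pd n k d f x‖) ≤
          C * (⨆ x : V n, ‖f x‖) ^ ((1 : ℝ)/(k+1)) *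
            (⨆ b : Fin (k+1) → Fin n, ⨆ x : V n, ‖pd n (k+1) b f x‖) ^ ((k : ℝ)/(k+1)) :=
  stmt3_general n k
end
end

section
/- Let $\tilde{m} \in \mathbb{N}$ and $\alpha \in \mathbb{N}_0^n$ with $|\alpha| \leq \tilde{m}$, and set $\theta = \frac{|\alpha|}{\tilde{m}}$. Then there is a constant $C>0$ such that for all $R \geq 1$ and all $f \in C_b^{\tilde{m}}(\mathbb{R}^n)$: $\sup_{|x| \geq R} |\partial_x^{\alpha} f(x)| \leq C \, \|f\|_{C_b^0(\mathbb{R}^n \setminus B_R(0))}^{1-\theta} \, \|f\|_{C_b^{\tilde{m}}(\mathbb{R}^n \setminus B_R(0))}^{\theta}$. -/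
noncomputable section
open MeasureTheory

noncomputable def extCb (n k : ℕ) (R : ℝ) {E : Type*} [NormedAddCommGroup E] [NormedSpace ℝ E]
    (f : V n → E) : ℝ :=
  ⨆ i : Fin (k+1), ⨆ x : {x : V n // R ≤ ‖x‖}, ‖iteratedFDeriv ℝ i f x‖

/-!
Landau's inequality on a half-line, `‖g'(0)‖² ≤ 8 · sup ‖g‖ · sup ‖g''‖` (Taylor's formula with
step `h`, optimised over `h`), is invariant under rescaling. It applies along every ray `x + t w`,
`t ≥ 0`, with `⟪x, w⟫ ≥ 0`, and such rays never enter the ball `‖y‖ < R ≤ ‖x‖`. So the suprema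
`a k` of `‖D^k f‖` over `{‖y‖ ≥ R}` satisfy `a (k+1)² ≤ 8 a k a (k+2)` for every `R`. Multiplied by
`8 ^ (k choose 2)` they become log-convex, which gives `a j ^ m ≤ C a 0 ^ (m - j) a m ^ j`.
-/

open Set

theorem landau_inequality_Ici {G : Type*} [NormedAddCommGroup G] [NormedSpace ℝ G]
    {g g' g'' : ℝ → G} {A B : ℝ} (hg : ∀ t, HasDerivAt g (g' t) t)
    (hg' : ∀ t, HasDerivAt g' (g'' t) t) (hA : ∀ t, 0 ≤ t → ‖g t‖ ≤ A)
    (hB : ∀ t, 0 ≤ t → ‖g'' t‖ ≤ B) :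
    ‖g' 0‖ ^ 2 ≤ 8 * A * B := by
  have hA0 : 0 ≤ A := (norm_nonneg _).trans (hA 0 le_rfl)
  have hB0 : 0 ≤ B := (norm_nonneg _).trans (hB 0 le_rfl)
  have hdrift : ∀ s, 0 ≤ s → ‖g' s - g' 0‖ ≤ B * s := fun s hs => by
    simpa [abs_of_nonneg hs] using (convex_Ici 0).norm_image_sub_le_of_norm_hasDerivWithin_le
      (fun t _ => (hg' t).hasDerivWithinAt) hB self_mem_Ici (mem_Ici.2 hs)
  have htaylor : ∀ h, 0 ≤ h → h * ‖g' 0‖ ≤ 2 * A + B * h ^ 2 := by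
    intro h hh
    have hrem : ‖(g h - h • g' 0) - (g 0 - (0 : ℝ) • g' 0)‖ ≤ B * h * ‖h - 0‖ :=
      (convex_Icc 0 h).norm_image_sub_le_of_norm_hasDerivWithin_le
        (f' := fun s => g' s - g' 0)
        (fun s _ => ((hg s).sub ((hasDerivAt_id s).smul_const (g' 0))).hasDerivWithinAt.congr_deriv
          (by simp))
        (fun s hs => (hdrift s hs.1).trans (by nlinarith [hs.1, hs.2]))
        (left_mem_Icc.2 hh) (right_mem_Icc.2 hh)
    calc h * ‖g' 0‖ = ‖(g h - g 0) - ((g h - h • g' 0) - (g 0 - (0 : ℝ) • g' 0))‖ := by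
          simp [norm_smul, abs_of_nonneg hh]
      _ ≤ (‖g h‖ + ‖g 0‖) + B * h * ‖h - 0‖ :=
          (norm_sub_le _ _).trans (add_le_add (norm_sub_le _ _) hrem)
      _ ≤ 2 * A + B * h ^ 2 := by
          rw [sub_zero, Real.norm_of_nonneg hh]; nlinarith [hA h hh, hA 0 le_rfl]
  have hdiscrim : discrim B (-‖g' 0‖) (2 * A) ≤ 0 := by
    refine discrim_le_zero fun h => ?_
    rcases le_total 0 h with hh | hh
    · nlinarith [htaylor h hh]
    · nlinarith [norm_nonneg (g' 0), mul_nonneg hB0 (mul_self_nonneg h)]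
  rw [discrim] at hdiscrim
  nlinarith

section InnerProductSpace

variable {E G : Type*} [NormedAddCommGroup E] [InnerProductSpace ℝ E]
  [NormedAddCommGroup G] [NormedSpace ℝ G]

theorem norm_le_norm_add_of_inner_nonneg {x v : E} (hxv : 0 ≤ inner ℝ x v) : ‖x‖ ≤ ‖x + v‖ := by
  have : ‖x‖ ^ 2 ≤ ‖x + v‖ ^ 2 := by
    rw [norm_add_sq_real]
    nlinarith [sq_nonneg ‖v‖]
  exact pow_le_pow_iff_left₀ (norm_nonneg _) (norm_nonneg _) two_ne_zero |>.1 this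

theorem norm_fderiv_le_of_bounded_outside_ball {F : E → G} (hF : ContDiff ℝ 2 F) {R A B : ℝ}
    (hA : ∀ y, R ≤ ‖y‖ → ‖F y‖ ≤ A)
    (hB : ∀ y, R ≤ ‖y‖ → ∀ v, ‖fderiv ℝ (fun z => fderiv ℝ F z v) y v‖ ≤ B * ‖v‖ ^ 2)
    {x : E} (hx : R ≤ ‖x‖) : ‖fderiv ℝ F x‖ ≤ √(8 * A * B) := by
  refine ContinuousLinearMap.opNorm_le_bound _ (Real.sqrt_nonneg _) fun w => ?_
  -- the ray `x + t • w`, `t ≥ 0`, stays outside the ball once `⟪x, w⟫ ≥ 0`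
  wlog hxw : 0 ≤ inner ℝ x w generalizing w
  · simpa using this (-w) (by rw [inner_neg_right]; linarith)
  have hline : ∀ t : ℝ, HasDerivAt (fun s : ℝ => x + s • w) w t := fun t => by
    simpa using ((hasDerivAt_id t).smul_const w).const_add x
  have hF1 : Differentiable ℝ F := hF.differentiable two_ne_zero
  have hF2 : Differentiable ℝ fun z => fderiv ℝ F z w :=
    ((hF.fderiv_right (m := 1) le_rfl).clm_apply contDiff_const).differentiable one_ne_zero
  have hray : ∀ t : ℝ, 0 ≤ t → R ≤ ‖x + t • w‖ := fun t ht =>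
    hx.trans (norm_le_norm_add_of_inner_nonneg (by rw [real_inner_smul_right]; positivity))
  have hlandau := landau_inequality_Ici (g := fun t => F (x + t • w))
    (fun t => (hF1 _).hasFDerivAt.comp_hasDerivAt t (hline t))
    (fun t => (hF2 _).hasFDerivAt.comp_hasDerivAt t (hline t))
    (fun t ht => hA _ (hray t ht)) (fun t ht => hB _ (hray t ht) w)
  rw [← Real.sqrt_sq (norm_nonneg w), ← Real.sqrt_mul' _ (sq_nonneg _)]
  refine Real.le_sqrt_of_sq_le ?_
  simpa [mul_assoc] using hlandau

end InnerProductSpace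

section ExteriorSup

variable {E G : Type*} [NormedAddCommGroup E] [NormedSpace ℝ E] [NormedAddCommGroup G]
  [NormedSpace ℝ G]

theorem norm_fderiv_fderiv_iteratedFDeriv_apply_le {f : E → G} {k : ℕ}
    (hf : ContDiff ℝ (k + 2) f) (y v : E) :
    ‖fderiv ℝ (fun z => fderiv ℝ (iteratedFDeriv ℝ k f) z v) y v‖ ≤
      ‖iteratedFDeriv ℝ (k + 2) f y‖ * ‖v‖ ^ 2 := by
  let e := continuousMultilinearCurryLeftEquiv ℝ (fun _ : Fin (k + 1) => E) G
  let Λ : (E [×k + 1]→L[ℝ] G) →L[ℝ] (E [×k]→L[ℝ] G) := (ContinuousLinearMap.apply ℝ _ v).comp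
    (e.toContinuousLinearEquiv : (E [×k + 1]→L[ℝ] G) →L[ℝ] (E →L[ℝ] E [×k]→L[ℝ] G))
  have hΛ : (fun z => fderiv ℝ (iteratedFDeriv ℝ k f) z v) =
      Λ ∘ iteratedFDeriv ℝ (k + 1) f := by
    rw [fderiv_iteratedFDeriv]; rfl
  have hd : DifferentiableAt ℝ (iteratedFDeriv ℝ (k + 1) f) y :=
    hf.differentiable_iteratedFDeriv (by norm_cast; omega) y
  rw [hΛ, fderiv_comp y Λ.differentiableAt hd, Λ.fderiv, ← norm_fderiv_iteratedFDeriv]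
  calc ‖e (fderiv ℝ (iteratedFDeriv ℝ (k + 1) f) y v) v‖
      ≤ ‖fderiv ℝ (iteratedFDeriv ℝ (k + 1) f) y v‖ * ‖v‖ :=
        ((e _).le_opNorm v).trans_eq (by rw [e.norm_map])
    _ ≤ ‖fderiv ℝ (iteratedFDeriv ℝ (k + 1) f) y‖ * ‖v‖ ^ 2 := by
        rw [sq, ← mul_assoc]; gcongr; exact ContinuousLinearMap.le_opNorm _ v

noncomputable def extSup (k : ℕ) (R : ℝ) (f : E → G) : ℝ :=
  ⨆ y : {y : E // R ≤ ‖y‖}, ‖iteratedFDeriv ℝ k f y‖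

variable {f : E → G} {k : ℕ} {R : ℝ}

theorem extSup_nonneg : 0 ≤ extSup k R f := Real.iSup_nonneg fun _ => norm_nonneg _

theorem norm_iteratedFDeriv_le_extSup
    (hf : BddAbove (range fun y : {y : E // R ≤ ‖y‖} => ‖iteratedFDeriv ℝ k f y‖)) {y : E}
    (hy : R ≤ ‖y‖) : ‖iteratedFDeriv ℝ k f y‖ ≤ extSup k R f :=
  le_ciSup hf ⟨y, hy⟩

end ExteriorSup

theorem sq_extSup_succ_le {E G : Type*} [NormedAddCommGroup E] [InnerProductSpace ℝ E]
    [NormedAddCommGroup G] [NormedSpace ℝ G] {f : E → G} {k : ℕ} {R : ℝ}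
    (hf : ContDiff ℝ (k + 2) f)
    (hk : BddAbove (range fun y : {y : E // R ≤ ‖y‖} => ‖iteratedFDeriv ℝ k f y‖))
    (hk2 : BddAbove (range fun y : {y : E // R ≤ ‖y‖} => ‖iteratedFDeriv ℝ (k + 2) f y‖)) :
    extSup (k + 1) R f ^ 2 ≤ 8 * extSup k R f * extSup (k + 2) R f := by
  rcases isEmpty_or_nonempty {y : E // R ≤ ‖y‖} with hE | hE
  · simp [extSup]
  refine (Real.le_sqrt extSup_nonneg
    (mul_nonneg (mul_nonneg (by norm_num) extSup_nonneg) extSup_nonneg)).1 (ciSup_le fun y => ?_)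
  rw [← norm_fderiv_iteratedFDeriv]
  exact norm_fderiv_le_of_bounded_outside_ball (hf.iteratedFDeriv_right (by simp [add_comm]))
    (fun z hz => norm_iteratedFDeriv_le_extSup hk hz)
    (fun z hz v => (norm_fderiv_fderiv_iteratedFDeriv_apply_le hf z v).trans <| by
      gcongr; exact norm_iteratedFDeriv_le_extSup hk2 hz)
    y.2

theorem pow_le_pow_mul_pow_of_sq_le_mul {N : ℕ → ℝ} (hN : ∀ k, 0 ≤ N k) {m : ℕ}
    (hconv : ∀ k, k + 2 ≤ m → N (k + 1) ^ 2 ≤ N k * N (k + 2)) {i j : ℕ} (hij : i + j = m) :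
    N j ^ m ≤ N 0 ^ i * N m ^ j := by
  induction m generalizing i j with
  | zero =>
    obtain ⟨rfl, rfl⟩ : i = 0 ∧ j = 0 := by omega
    simp
  | succ m ih =>
    replace ih := fun {i j : ℕ} => ih (fun k hk => hconv k (by omega)) (i := i) (j := j)
    rcases i with _ | i
    · obtain rfl : j = m + 1 := by omega
      simp
    rcases Nat.eq_zero_or_pos j with rfl | hj
    · simp [show i = m by omega]
    -- the case `j = m`, after cancelling `N m ^ (m - 1)`
    have htop : N m ^ (m + 1) ≤ N 0 * N (m + 1) ^ m := by
      obtain ⟨p, rfl⟩ : ∃ p, m = p + 1 := ⟨m - 1, by omega⟩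
      rcases (hN (p + 1)).eq_or_lt with h0 | hpos
      · rw [← h0, zero_pow (by omega)]; exact mul_nonneg (hN 0) (pow_nonneg (hN _) _)
      have key : N (p + 1) ^ p * N (p + 1) ^ (p + 2) ≤
          N (p + 1) ^ p * (N 0 * N (p + 2) ^ (p + 1)) :=
        calc N (p + 1) ^ p * N (p + 1) ^ (p + 2) = (N (p + 1) ^ 2) ^ (p + 1) := by ring
          _ ≤ (N p * N (p + 2)) ^ (p + 1) := by gcongr; exact hconv p (by omega)
          _ = N p ^ (p + 1) * N (p + 2) ^ (p + 1) := by ring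
          _ ≤ (N 0 ^ 1 * N (p + 1) ^ p) * N (p + 2) ^ (p + 1) :=
              mul_le_mul_of_nonneg_right (ih (by omega)) (pow_nonneg (hN _) _)
          _ = N (p + 1) ^ p * (N 0 * N (p + 2) ^ (p + 1)) := by ring
      exact le_of_mul_le_mul_left key (pow_pos hpos p)
    obtain rfl : m = i + j := by omega
    refine (pow_le_pow_iff_left₀ (pow_nonneg (hN j) _)
      (mul_nonneg (pow_nonneg (hN 0) _) (pow_nonneg (hN _) _)) (by omega : i + j ≠ 0)).1 ?_
    calc (N j ^ (i + j + 1)) ^ (i + j) = (N j ^ (i + j)) ^ (i + j + 1) := by ring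
      _ ≤ (N 0 ^ i * N (i + j) ^ j) ^ (i + j + 1) :=
          pow_le_pow_left₀ (pow_nonneg (hN j) _) (ih rfl) _
      _ = N 0 ^ (i * (i + j + 1)) * (N (i + j) ^ (i + j + 1)) ^ j := by ring
      _ ≤ N 0 ^ (i * (i + j + 1)) * (N 0 * N (i + j + 1) ^ (i + j)) ^ j :=
          mul_le_mul_of_nonneg_left (pow_le_pow_left₀ (pow_nonneg (hN _) _) htop j)
            (pow_nonneg (hN 0) _)
      _ = (N 0 ^ (i + 1) * N (i + j + 1) ^ j) ^ (i + j) := by ring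

theorem pow_le_mul_pow_mul_pow_of_sq_le {M : ℕ → ℝ} (hM : ∀ k, 0 ≤ M k) {K : ℝ} (hK : 1 ≤ K)
    {m : ℕ} (hconv : ∀ k, k + 2 ≤ m → M (k + 1) ^ 2 ≤ K * M k * M (k + 2)) {i j : ℕ}
    (hij : i + j = m) : M j ^ m ≤ K ^ (j * m.choose 2) * M 0 ^ i * M m ^ j := by
  have hK0 : 0 ≤ K := zero_le_one.trans hK
  -- `k.choose 2` has second difference `1`, which absorbs the factor `K`
  have hN := pow_le_pow_mul_pow_of_sq_le_mul (N := fun k => K ^ k.choose 2 * M k)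
    (fun k => mul_nonneg (pow_nonneg hK0 _) (hM k)) (fun k hk => ?_) hij
  · calc M j ^ m ≤ (K ^ j.choose 2) ^ m * M j ^ m :=
          le_mul_of_one_le_left (pow_nonneg (hM j) m) (one_le_pow₀ (one_le_pow₀ hK))
      _ = (K ^ j.choose 2 * M j) ^ m := by ring
      _ ≤ (K ^ (0 : ℕ).choose 2 * M 0) ^ i * (K ^ m.choose 2 * M m) ^ j := hN
      _ = K ^ (j * m.choose 2) * M 0 ^ i * M m ^ j := by simp; ring
  · have h1 : (k + 1).choose 2 = k.choose 2 + k := by simp [Nat.choose_succ_succ', add_comm]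
    have h2 : (k + 2).choose 2 = k.choose 2 + 2 * k + 1 := by
      simp [Nat.choose_succ_succ']; ring
    calc (K ^ (k + 1).choose 2 * M (k + 1)) ^ 2
        = K ^ (2 * (k.choose 2 + k)) * M (k + 1) ^ 2 := by rw [h1]; ring
      _ ≤ K ^ (2 * (k.choose 2 + k)) * (K * M k * M (k + 2)) := by gcongr; exact hconv k hk
      _ = K ^ k.choose 2 * M k * (K ^ (k + 2).choose 2 * M (k + 2)) := by rw [h2]; ring

theorem le_mul_rpow_mul_rpow_of_pow_le {a b c K : ℝ} (ha : 0 ≤ a) (hb : 0 ≤ b) (hc : 0 ≤ c)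
    (hK : 0 ≤ K) {i j m : ℕ} (hm : m ≠ 0) (hij : i + j = m) (h : a ^ m ≤ K * b ^ i * c ^ j) :
    a ≤ K ^ (m : ℝ)⁻¹ * b ^ (1 - (j : ℝ) / m) * c ^ ((j : ℝ) / m) := by
  have hi : 1 - (j : ℝ) / m = i * (m : ℝ)⁻¹ := by
    rw [eq_comm, ← div_eq_mul_inv, eq_sub_iff_add_eq, ← add_div,
      div_eq_one_iff_eq (by exact_mod_cast hm)]
    exact_mod_cast hij
  calc a = (a ^ m) ^ (m : ℝ)⁻¹ := (Real.pow_rpow_inv_natCast ha hm).symm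
    _ ≤ (K * b ^ i * c ^ j) ^ (m : ℝ)⁻¹ := by gcongr
    _ = K ^ (m : ℝ)⁻¹ * b ^ (1 - (j : ℝ) / m) * c ^ ((j : ℝ) / m) := by
      rw [Real.mul_rpow (by positivity) (by positivity), Real.mul_rpow hK (by positivity), hi,
        div_eq_mul_inv, Real.rpow_mul hb, Real.rpow_mul hc, Real.rpow_natCast, Real.rpow_natCast]

section EuclideanSpace

variable {n : ℕ} {G : Type*} [NormedAddCommGroup G] [NormedSpace ℝ G]

theorem extCb_zero_eq_extSup (R : ℝ) (f : V n → G) : extCb n 0 R f = extSup 0 R f :=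
  ciSup_unique (s := fun i : Fin 1 => extSup i R f)

theorem extSup_le_extCb {R : ℝ} {f : V n → G} {i k : ℕ} (hi : i ≤ k) :
    extSup i R f ≤ extCb n k R f :=
  le_ciSup (f := fun i : Fin (k + 1) => extSup i R f) (finite_range _).bddAbove ⟨i, by omega⟩

theorem norm_pd_le {k : ℕ} (d : Fin k → Fin n) (f : V n → G) (x : V n) :
    ‖pd n k d f x‖ ≤ ‖iteratedFDeriv ℝ k f x‖ :=
  ((iteratedFDeriv ℝ k f x).le_opNorm _).trans_eq (by simp)

end EuclideanSpace

/-- exterior-domain interpolation estimate for a single derivative `∂^α f`,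
with constant independent of `R ≥ 1`. -/
theorem stmt5 (n m : ℕ) (hm : 1 ≤ m) (j : ℕ) (hj : j ≤ m) (d : Fin j → Fin n) :
    ∃ C > 0, ∀ R : ℝ, 1 ≤ R → ∀ f : V n → ℂ, ContDiff ℝ m f →
      (∃ A : ℝ, ∀ i ≤ m, ∀ x, ‖iteratedFDeriv ℝ i f x‖ ≤ A) →
      ∀ x : V n, R ≤ ‖x‖ →
        ‖pd n j d f x‖ ≤ C * extCb n 0 R f ^ (1 - (j : ℝ)/(m : ℝ)) *
          extCb n m R f ^ ((j : ℝ)/(m : ℝ)) := by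
  refine ⟨(8 ^ (j * m.choose 2)) ^ (m : ℝ)⁻¹, by positivity, ?_⟩
  rintro R - f hf ⟨A, hA⟩ x hx
  have hbdd : ∀ k ≤ m,
      BddAbove (range fun y : {y : V n // R ≤ ‖y‖} => ‖iteratedFDeriv ℝ k f y‖) :=
    fun k hk => ⟨A, by rintro _ ⟨y, rfl⟩; exact hA k hk y⟩
  have hinterp := pow_le_mul_pow_mul_pow_of_sq_le (M := fun k => extSup k R f)
    (fun _ => extSup_nonneg) (by norm_num : (1 : ℝ) ≤ 8)
    (fun k hk => sq_extSup_succ_le (hf.of_le (by exact_mod_cast hk)) (hbdd k (by omega))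
      (hbdd (k + 2) hk)) (Nat.sub_add_cancel hj)
  calc ‖pd n j d f x‖ ≤ ‖iteratedFDeriv ℝ j f x‖ := norm_pd_le d f x
    _ ≤ extSup j R f := norm_iteratedFDeriv_le_extSup (hbdd j hj) hx
    _ ≤ (8 ^ (j * m.choose 2)) ^ (m : ℝ)⁻¹ * extSup 0 R f ^ (1 - (j : ℝ) / m) *
          extSup m R f ^ ((j : ℝ) / m) :=
        le_mul_rpow_mul_rpow_of_pow_le extSup_nonneg extSup_nonneg extSup_nonneg (by positivity)
          (by omega) (Nat.sub_add_cancel hj) hinterp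
    _ ≤ _ := by
        rw [extCb_zero_eq_extSup]
        gcongr
        · exact mul_nonneg (by positivity) (Real.rpow_nonneg extSup_nonneg _)
        · exact extSup_nonneg
        · exact extSup_le_extCb le_rfl
end
end

section
/- Let $X$ and $Y$ be complex Banach spaces and let $T \in \mathscr{L}(X,Y)$ be a Fredholm operator of index $0$ that is not invertible. Then there is $\nu > 0$ with the following property: for every $H \in \mathscr{L}(X,Y)$ with $\|H\| < \nu$ such that $T + H$ is invertible, and for every $\varepsilon > 0$, there exists $\delta \in (0, \varepsilon]$ such that for every $S \in \mathscr{L}(X,Y)$ with $\|S - T\| < \delta$, the operator $S + zH$ fails to be invertible for some $z \in \mathbb{C}$ with $|z| < \varepsilon$. -/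
/-!
Choose a continuous projection `P` of `X` onto `N = ker T` and a map `J : N → Y` lifting an
isomorphism of `N` onto the cokernel (index `0`). Then `T + J P` is invertible, hence so is
`A + J P` for `A` near `T`, and `A` is injective as soon as `Φ A = det (1 - P (A + J P)⁻¹ J)`
(a determinant on the finite-dimensional space `N`) is nonzero. `Φ` is holomorphic near `T`,
vanishes at `T` because `N ≠ 0`, and does not vanish at `T + H`. So `z ↦ Φ (T + z H)` has
isolated zeros, and stays away from `0` on a small circle around `0`. For `S` near `T`,
`Φ (S + z H)` is uniformly close to `Φ (T + z H)` on the disc, and the minimum modulus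
principle produces a zero of `z ↦ Φ (S + z H)` inside it, where `S + z H` is not injective.
-/

/-- Two-sided invertibility of a bounded operator (bounded inverse). -/
def IsInvertibleOp {X Y : Type*} [NormedAddCommGroup X] [NormedSpace ℂ X]
    [NormedAddCommGroup Y] [NormedSpace ℂ Y] (T : X →L[ℂ] Y) : Prop :=
  ∃ S : Y →L[ℂ] X, (∀ x, S (T x) = x) ∧ (∀ y, T (S y) = y)

open Set Metric Filter Topology

namespace LinearMap

variable {M N : Type*} [AddCommGroup M] [AddCommGroup N]

theorem bijective_add_comp_of_bijective_mkQ_comp {R : Type*} [Ring R] [Module R M] [Module R N]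
    (T : M →ₗ[R] N) (P : M →ₗ[R] ker T) (hP : ∀ k : ker T, P k = k) (J : ker T →ₗ[R] N)
    (hJ : Function.Bijective ((range T).mkQ ∘ₗ J)) :
    Function.Bijective (T + J ∘ₗ P) := by
  have hTP (x : M) : T (P x) = 0 := (P x).2
  refine ⟨(injective_iff_map_eq_zero _).2 fun x hx => ?_, fun y => ?_⟩
  · have hPx : P x = 0 := hJ.1 <| by
      have hTx : (range T).mkQ (T x) = 0 := by simp
      have := congrArg (range T).mkQ hx
      rw [add_apply, map_add, hTx, zero_add, map_zero] at this
      simpa using this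
    have hTx : T x = 0 := by simpa [hPx] using hx
    calc x = P x := congrArg Subtype.val (hP ⟨x, hTx⟩).symm
      _ = 0 := by simp [hPx]
  · obtain ⟨k, hk⟩ := hJ.2 ((range T).mkQ y)
    obtain ⟨x, hx⟩ : y - J k ∈ range T := by
      rw [← Submodule.Quotient.mk_eq_zero, Submodule.Quotient.mk_sub]
      simp_all
    refine ⟨x - P x + k, ?_⟩
    simp [hP, hTP, hx]

theorem not_injective_of_det_id_sub_eq_zero {𝕜 K : Type*} [Field 𝕜] [Module 𝕜 M] [Module 𝕜 N]
    [AddCommGroup K] [Module 𝕜 K] [FiniteDimensional 𝕜 K]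
    {A : M →ₗ[𝕜] N} {P : M →ₗ[𝕜] K} {J : K →ₗ[𝕜] N} {W : N →ₗ[𝕜] M}
    (hW : ∀ y, (A + J ∘ₗ P) (W y) = y) (hdet : (id - P ∘ₗ W ∘ₗ J).det = 0) :
    ¬ Function.Injective A := by
  obtain ⟨k, hk, hk0⟩ :=
    Submodule.exists_mem_ne_zero_of_ne_bot (bot_lt_ker_of_det_eq_zero hdet).ne'
  have hfix : P (W (J k)) = k := (sub_eq_zero.1 hk).symm
  have hA : A (W (J k)) = 0 := by simpa [hfix] using hW (J k)
  intro hinj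
  exact hk0 (by rw [← hfix, hinj (hA.trans A.map_zero.symm), map_zero])

end LinearMap

namespace ContinuousLinearMap

theorem differentiable_det {𝕜 E : Type*} [NontriviallyNormedField 𝕜] [CompleteSpace 𝕜]
    [NormedAddCommGroup E] [NormedSpace 𝕜 E] [FiniteDimensional 𝕜 E] :
    Differentiable 𝕜 fun f : E →L[𝕜] E => f.det := by
  classical
  let b := Module.finBasis 𝕜 E
  have hentry (i j) : Differentiable 𝕜 fun f : E →L[𝕜] E =>
      LinearMap.toMatrix b b (f : E →ₗ[𝕜] E) i j := by
    convert ((LinearMap.toContinuousLinearMap (b.coord i)).comp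
      (ContinuousLinearMap.apply 𝕜 E (b j))).differentiable using 1
    ext f
    simp [LinearMap.toMatrix_apply]
  have hdet : (fun f : E →L[𝕜] E => f.det) =
      fun f : E →L[𝕜] E => (LinearMap.toMatrix b b (f : E →ₗ[𝕜] E)).det :=
    funext fun f => (LinearMap.det_toMatrix b _).symm
  rw [hdet]
  simp only [Matrix.det_apply]
  fun_prop

variable {𝕜 X Y : Type*}
  [NormedAddCommGroup X] [CompleteSpace X] [NormedAddCommGroup Y] [CompleteSpace Y]

theorem isInvertible_of_bijective [NontriviallyNormedField 𝕜] [NormedSpace 𝕜 X] [NormedSpace 𝕜 Y]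
    {T : X →L[𝕜] Y} (hT : Function.Bijective T) :
    T.IsInvertible :=
  ⟨.ofBijective T (LinearMap.ker_eq_bot.2 hT.1) (LinearMap.range_eq_top.2 hT.2), rfl⟩

theorem exists_isInvertible_add_comp_of_finrank_ker_eq [RCLike 𝕜] [NormedSpace 𝕜 X]
    [NormedSpace 𝕜 Y] (T : X →L[𝕜] Y)
    [FiniteDimensional 𝕜 (LinearMap.ker (T : X →ₗ[𝕜] Y))]
    [FiniteDimensional 𝕜 (Y ⧸ LinearMap.range (T : X →ₗ[𝕜] Y))]
    (hind : Module.finrank 𝕜 (LinearMap.ker (T : X →ₗ[𝕜] Y)) =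
      Module.finrank 𝕜 (Y ⧸ LinearMap.range (T : X →ₗ[𝕜] Y))) :
    ∃ (P : X →L[𝕜] LinearMap.ker (T : X →ₗ[𝕜] Y)) (J : LinearMap.ker (T : X →ₗ[𝕜] Y) →L[𝕜] Y),
      (∀ k : LinearMap.ker (T : X →ₗ[𝕜] Y), P k = k) ∧ (T + J ∘L P).IsInvertible := by
  obtain ⟨P, hP⟩ := Submodule.ClosedComplemented.of_finiteDimensional
    (LinearMap.ker (T : X →ₗ[𝕜] Y))
  obtain ⟨j⟩ := FiniteDimensional.nonempty_linearEquiv_of_finrank_eq hind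
  obtain ⟨s, hs⟩ := (LinearMap.range (T : X →ₗ[𝕜] Y)).mkQ.exists_rightInverse_of_surjective
    (LinearMap.range_eq_top.2 (Submodule.mkQ_surjective _))
  let J := LinearMap.toContinuousLinearMap (s ∘ₗ j.toLinearMap)
  have hJ : (LinearMap.range (T : X →ₗ[𝕜] Y)).mkQ ∘ₗ (J : _ →ₗ[𝕜] Y) = j.toLinearMap := by
    ext k
    exact LinearMap.congr_fun hs (j k)
  refine ⟨P, J, hP, isInvertible_of_bijective ?_⟩
  exact LinearMap.bijective_add_comp_of_bijective_mkQ_comp (T : X →ₗ[𝕜] Y) (P : X →ₗ[𝕜] _) hP J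
    (hJ ▸ j.bijective)

end ContinuousLinearMap

section IsInvertibleOp

variable {X Y : Type*} [NormedAddCommGroup X] [NormedSpace ℂ X]
  [NormedAddCommGroup Y] [NormedSpace ℂ Y]

theorem IsInvertibleOp.injective {T : X →L[ℂ] Y} (hT : IsInvertibleOp T) :
    Function.Injective T :=
  let ⟨_, hST, _⟩ := hT
  Function.LeftInverse.injective hST

theorem ContinuousLinearMap.IsInvertible.isInvertibleOp {T : X →L[ℂ] Y} (hT : T.IsInvertible) :
    IsInvertibleOp T :=
  ⟨T.inverse, hT.inverse_apply_self, hT.self_apply_inverse⟩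

theorem nontrivial_ker_of_not_isInvertibleOp [CompleteSpace X] [CompleteSpace Y] {T : X →L[ℂ] Y}
    [FiniteDimensional ℂ (Y ⧸ LinearMap.range (T : X →ₗ[ℂ] Y))]
    (hind : Module.finrank ℂ (LinearMap.ker (T : X →ₗ[ℂ] Y)) =
      Module.finrank ℂ (Y ⧸ LinearMap.range (T : X →ₗ[ℂ] Y)))
    (hT : ¬ IsInvertibleOp T) : Nontrivial (LinearMap.ker (T : X →ₗ[ℂ] Y)) := by
  by_contra hker
  rw [not_nontrivial_iff_subsingleton] at hker
  have hcoker : Subsingleton (Y ⧸ LinearMap.range (T : X →ₗ[ℂ] Y)) :=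
    Module.finrank_zero_iff.1 (hind ▸ Module.finrank_zero_of_subsingleton)
  refine hT (ContinuousLinearMap.isInvertible_of_bijective ⟨?_, ?_⟩).isInvertibleOp
  · exact LinearMap.ker_eq_bot.1 Submodule.eq_bot_of_subsingleton
  · exact LinearMap.range_eq_top.1 (Submodule.Quotient.subsingleton_iff.1 hcoker)

end IsInvertibleOp

section LocalDet

variable {𝕜 X Y K : Type*} [NontriviallyNormedField 𝕜]
  [NormedAddCommGroup X] [NormedSpace 𝕜 X] [NormedAddCommGroup Y] [NormedSpace 𝕜 Y]
  [NormedAddCommGroup K] [NormedSpace 𝕜 K] [FiniteDimensional 𝕜 K]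

-- `inverse` is `0` at non-invertible operators: only meaningful where `A + J ∘L P` is invertible.
noncomputable def localDet (P : X →L[𝕜] K) (J : K →L[𝕜] Y) (A : X →L[𝕜] Y) : 𝕜 :=
  (1 - P ∘L (A + J ∘L P).inverse ∘L J).det

variable {P : X →L[𝕜] K} {J : K →L[𝕜] Y} {A : X →L[𝕜] Y}

theorem differentiableAt_localDet [CompleteSpace 𝕜] [CompleteSpace X]
    (hA : (A + J ∘L P).IsInvertible) : DifferentiableAt 𝕜 (localDet P J) A := by
  have hinv : DifferentiableAt 𝕜 (fun B : X →L[𝕜] Y => (B + J ∘L P).inverse) A :=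
    (hA.contDiffAt_map_inverse (n := 1)).differentiableAt one_ne_zero |>.comp A
      (differentiableAt_id.add_const _)
  exact ContinuousLinearMap.differentiable_det.differentiableAt.comp A
    ((differentiableAt_const _).sub
      ((differentiableAt_const P).clm_comp (hinv.clm_comp (differentiableAt_const J))))

theorem not_injective_of_localDet_eq_zero (hA : (A + J ∘L P).IsInvertible)
    (h : localDet P J A = 0) : ¬ Function.Injective A :=
  LinearMap.not_injective_of_det_id_sub_eq_zero (P := (P : X →ₗ[𝕜] K)) (J := (J : K →ₗ[𝕜] Y))
    (W := ((A + J ∘L P).inverse : Y →ₗ[𝕜] X)) hA.self_apply_inverse h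

end LocalDet

theorem localDet_self_eq_zero {𝕜 X Y : Type*} [NontriviallyNormedField 𝕜]
    [NormedAddCommGroup X] [NormedSpace 𝕜 X] [NormedAddCommGroup Y] [NormedSpace 𝕜 Y]
    {T : X →L[𝕜] Y} [FiniteDimensional 𝕜 (LinearMap.ker (T : X →ₗ[𝕜] Y))]
    [Nontrivial (LinearMap.ker (T : X →ₗ[𝕜] Y))] (P : X →L[𝕜] LinearMap.ker (T : X →ₗ[𝕜] Y))
    (hP : ∀ k : LinearMap.ker (T : X →ₗ[𝕜] Y), P k = k)
    (J : LinearMap.ker (T : X →ₗ[𝕜] Y) →L[𝕜] Y) (hT : (T + J ∘L P).IsInvertible) :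
    localDet P J T = 0 := by
  have hzero : 1 - P ∘L (T + J ∘L P).inverse ∘L J = 0 := by
    ext1 k
    have hk : (T + J ∘L P).inverse (J k) = k := hT.inverse_apply_eq.2 (by simp [hP])
    simp [hk, hP]
  rw [localDet, hzero, ContinuousLinearMap.det, ContinuousLinearMap.toLinearMap_zero,
    LinearMap.det_zero, zero_pow Module.finrank_pos.ne']

theorem Complex.exists_mem_closedBall_eq_zero_of_norm_lt {f : ℂ → ℂ} {c : ℂ} {r m : ℝ}
    (hr : 0 < r) (hf : DifferentiableOn ℂ f (closedBall c r)) (hc : ‖f c‖ < m)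
    (hsphere : ∀ z ∈ sphere c r, m ≤ ‖f z‖) : ∃ z ∈ closedBall c r, f z = 0 := by
  by_contra! hne
  have hm : 0 < m := (norm_nonneg _).trans_lt hc
  have hinv : DiffContOnCl ℂ (fun z => (f z)⁻¹) (ball c r) :=
    DifferentiableOn.diffContOnCl (by rw [closure_ball c hr.ne']; exact hf.inv hne)
  have hbound : ‖(f c)⁻¹‖ ≤ m⁻¹ := by
    refine Complex.norm_le_of_forall_mem_frontier_norm_le isBounded_ball hinv (fun z hz => ?_)
      (subset_closure (mem_ball_self hr))
    rw [frontier_ball c hr.ne'] at hz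
    rw [norm_inv]
    exact inv_anti₀ hm (hsphere z hz)
  rw [norm_inv] at hbound
  exact hc.not_ge ((inv_le_inv₀ (norm_pos_iff.2 (hne c (mem_closedBall_self hr.le))) hm).1 hbound)

theorem AnalyticAt.exists_forall_sphere_ne_zero {𝕜 E : Type*} [NontriviallyNormedField 𝕜]
    [NormedAddCommGroup E] [NormedSpace 𝕜 E] {g : 𝕜 → E} {c : 𝕜} (hg : AnalyticAt 𝕜 g c)
    (hne : ¬ ∀ᶠ z in 𝓝 c, g z = 0) {ε : ℝ} (hε : 0 < ε) :
    ∃ r, 0 < r ∧ r < ε ∧ ∀ z ∈ sphere c r, g z ≠ 0 := by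
  obtain ⟨ρ, hρ, hρg⟩ := Metric.eventually_nhds_iff.1 <| eventually_nhdsWithin_iff.1 <|
    hg.eventually_eq_zero_or_eventually_ne_zero.resolve_left hne
  refine ⟨min (ε / 2) (ρ / 2), by positivity, by linarith [min_le_left (ε / 2) (ρ / 2)],
    fun z hz => hρg ?_ ?_⟩
  · rw [mem_sphere.1 hz]
    linarith [min_le_right (ε / 2) (ρ / 2)]
  · rintro rfl
    rw [mem_sphere, dist_self] at hz
    exact (lt_min (half_pos hε) (half_pos hρ)).ne hz

theorem eventually_exists_mem_closedBall_eq_zero_add_smul {E : Type*} [NormedAddCommGroup E]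
    [NormedSpace ℂ E] {Φ : E → ℂ} {W : Set E} (hΦ : DifferentiableOn ℂ Φ W) {T H : E} {δ r : ℝ}
    (hδ : 0 < δ) (hr : 0 < r) (hmaps : ∀ S ∈ ball T δ, ∀ z ∈ closedBall (0 : ℂ) r, S + z • H ∈ W)
    (hT : Φ T = 0) (hsphere : ∀ z ∈ sphere (0 : ℂ) r, Φ (T + z • H) ≠ 0) :
    ∀ᶠ S in 𝓝 T, ∃ z ∈ closedBall (0 : ℂ) r, Φ (S + z • H) = 0 := by
  have hline (S : E) (hS : S ∈ ball T δ) :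
      DifferentiableOn ℂ (fun z : ℂ => Φ (S + z • H)) (closedBall 0 r) :=
    hΦ.comp (by fun_prop : Differentiable ℂ fun z : ℂ => S + z • H).differentiableOn (hmaps S hS)
  obtain ⟨zm, hzm, hmin⟩ := (isCompact_sphere (0 : ℂ) r).exists_isMinOn
    (NormedSpace.sphere_nonempty.2 hr.le)
    ((hline T (mem_ball_self hδ)).continuousOn.mono sphere_subset_closedBall).norm
  set m := ‖Φ (T + zm • H)‖
  have hm : 0 < m := norm_pos_iff.2 (hsphere zm hzm)
  obtain ⟨v, hv, hvΦ⟩ := (isCompact_closedBall (0 : ℂ) r).mem_uniformity_of_prod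
    (f := fun S z => Φ (S + z • H)) (s := ball T δ)
    (hΦ.continuousOn.comp (by fun_prop : Continuous fun p : E × ℂ => p.1 + p.2 • H).continuousOn
      fun p hp => hmaps p.1 hp.1 p.2 hp.2) (mem_ball_self hδ) (dist_mem_uniformity (half_pos hm))
  rw [isOpen_ball.nhdsWithin_eq (mem_ball_self hδ)] at hv
  filter_upwards [hv, ball_mem_nhds T hδ] with S hSv hS
  have hS0 : ‖Φ (S + (0 : ℂ) • H)‖ < m / 2 := by
    simpa [hT] using hvΦ S hSv 0 (mem_closedBall_self hr.le)
  have hSsphere (z : ℂ) (hz : z ∈ sphere 0 r) : m / 2 ≤ ‖Φ (S + z • H)‖ := by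
    have hclose : dist (Φ (S + z • H)) (Φ (T + z • H)) < m / 2 :=
      hvΦ S hSv z (sphere_subset_closedBall hz)
    linarith [isMinOn_iff.1 hmin z hz, dist_eq_norm' (Φ (S + z • H)) (Φ (T + z • H)),
      norm_le_norm_add_norm_sub' (Φ (T + z • H)) (Φ (S + z • H))]
  exact Complex.exists_mem_closedBall_eq_zero_of_norm_lt hr (hline S hS) hS0 hSsphere

theorem eventually_exists_zero_add_smul {E : Type*} [NormedAddCommGroup E] [NormedSpace ℂ E]
    {Φ : E → ℂ} {T H : E} {ρ : ℝ} (hΦ : DifferentiableOn ℂ Φ (ball T ρ)) (hH : 2 * ‖H‖ < ρ)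
    (hT : Φ T = 0) (hTH : Φ (T + H) ≠ 0) {ε : ℝ} (hε : 0 < ε) :
    ∀ᶠ S in 𝓝 T, ∃ z : ℂ, ‖z‖ < ε ∧ S + z • H ∈ ball T ρ ∧ Φ (S + z • H) = 0 := by
  have hρ : 0 < ρ := by linarith [norm_nonneg H]
  have hmem {S : E} {z : ℂ} (hS : dist S T < ρ / 2) (hz : ‖z‖ ≤ 1) : S + z • H ∈ ball T ρ := by
    rw [mem_ball, dist_eq_norm, add_sub_right_comm]
    calc ‖S - T + z • H‖ ≤ ‖S - T‖ + ‖z • H‖ := norm_add_le _ _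
      _ < ρ := by rw [norm_smul, ← dist_eq_norm]; nlinarith [norm_nonneg H]
  have hg : AnalyticOnNhd ℂ (fun z : ℂ => Φ (T + z • H)) (ball 0 2) :=
    (hΦ.comp (by fun_prop : Differentiable ℂ fun z : ℂ => T + z • H).differentiableOn
      fun z hz => by
        rw [mem_ball, dist_eq_norm, add_sub_cancel_left, norm_smul]
        nlinarith [mem_ball_zero_iff.1 hz, norm_nonneg H]).analyticOnNhd isOpen_ball
  have hne : ¬ ∀ᶠ z : ℂ in 𝓝 0, Φ (T + z • H) = 0 := fun h => hTH <| by
    simpa using hg.eqOn_zero_of_preconnected_of_eventuallyEq_zero (convex_ball 0 2).isPreconnected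
      (mem_ball_self two_pos) h (by simp : (1 : ℂ) ∈ ball 0 2)
  obtain ⟨r, hr, hrε, hsphere⟩ :=
    (hg 0 (mem_ball_self two_pos)).exists_forall_sphere_ne_zero hne (lt_min hε one_pos)
  have hr1 (z : ℂ) (hz : z ∈ closedBall 0 r) : ‖z‖ ≤ 1 := by
    linarith [mem_closedBall_zero_iff.1 hz, min_le_right ε 1]
  filter_upwards [ball_mem_nhds T (half_pos hρ), eventually_exists_mem_closedBall_eq_zero_add_smul
    hΦ (half_pos hρ) hr (fun S hS z hz => hmem hS (hr1 z hz)) hT (by simpa using hsphere)]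
    with S hS ⟨z, hz, hzero⟩
  exact ⟨z, by linarith [mem_closedBall_zero_iff.1 hz, min_le_left ε 1], hmem hS (hr1 z hz), hzero⟩

theorem stmt8_general {X Y : Type*} [NormedAddCommGroup X] [NormedSpace ℂ X] [CompleteSpace X]
    [NormedAddCommGroup Y] [NormedSpace ℂ Y] [CompleteSpace Y] (T : X →L[ℂ] Y)
    (hker : FiniteDimensional ℂ (LinearMap.ker (T : X →ₗ[ℂ] Y)))
    (hcoker : FiniteDimensional ℂ (Y ⧸ LinearMap.range (T : X →ₗ[ℂ] Y)))
    (hind : Module.finrank ℂ (LinearMap.ker (T : X →ₗ[ℂ] Y)) = Module.finrank ℂ (Y ⧸ LinearMap.range (T : X →ₗ[ℂ] Y)))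
    (hninv : ¬ IsInvertibleOp T) :
    ∃ ν > 0, ∀ H : X →L[ℂ] Y, ‖H‖ < ν → IsInvertibleOp (T + H) →
      ∀ ε > 0, ∃ δ : ℝ, 0 < δ ∧ δ ≤ ε ∧ ∀ S : X →L[ℂ] Y, ‖S - T‖ < δ →
        ∃ z : ℂ, ‖z‖ < ε ∧ ¬ IsInvertibleOp (S + z • H) := by
  have := nontrivial_ker_of_not_isInvertibleOp hind hninv
  obtain ⟨P, J, hP, hTJ⟩ := T.exists_isInvertible_add_comp_of_finrank_ker_eq hind
  have hU : IsOpen {A : X →L[ℂ] Y | (A + J ∘L P).IsInvertible} :=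
    ContinuousLinearEquiv.isOpen.preimage (continuous_add_const _)
  obtain ⟨ρ, hρ, hρU⟩ := Metric.isOpen_iff.1 hU T hTJ
  refine ⟨ρ / 2, half_pos hρ, fun H hH hTH ε hε => ?_⟩
  have hΦ : DifferentiableOn ℂ (localDet P J) (ball T ρ) := fun A hA =>
    (differentiableAt_localDet (hρU hA)).differentiableWithinAt
  have hTH_ball : T + H ∈ ball T ρ := by
    rw [mem_ball, dist_eq_norm, add_sub_cancel_left]
    linarith
  obtain ⟨δ, hδ, hδS⟩ := Metric.eventually_nhds_iff.1 <|
    eventually_exists_zero_add_smul hΦ (by linarith) (localDet_self_eq_zero P hP J hTJ)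
      (fun h => not_injective_of_localDet_eq_zero (hρU hTH_ball) h hTH.injective) hε
  refine ⟨min δ ε, lt_min hδ hε, min_le_right _ _, fun S hS => ?_⟩
  obtain ⟨z, hz, hzU, hzero⟩ := hδS (by rw [dist_eq_norm]; exact hS.trans_le (min_le_left _ _))
  exact ⟨z, hz, fun hinv => not_injective_of_localDet_eq_zero (hρU hzU) hzero hinv.injective⟩

/-- Rabier's lemma: if `T` is Fredholm of index `0` and not invertible,
there is a ball `B_ν(0)` such that for every `H` in it with `T + H` invertible and every
`ε > 0` there is `δ ∈ (0, ε]` such that every `S` with `‖S - T‖ < δ` has `S + zH` not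
invertible for some `|z| < ε`. -/
theorem stmt8 {X Y : Type*} [NormedAddCommGroup X] [NormedSpace ℂ X] [CompleteSpace X]
    [NormedAddCommGroup Y] [NormedSpace ℂ Y] [CompleteSpace Y] (T : X →L[ℂ] Y)
    (hker : FiniteDimensional ℂ (LinearMap.ker (T : X →ₗ[ℂ] Y)))
    (hcl : IsClosed ((LinearMap.range (T : X →ₗ[ℂ] Y) : Submodule ℂ Y) : Set Y))
    (hcoker : FiniteDimensional ℂ (Y ⧸ LinearMap.range (T : X →ₗ[ℂ] Y)))
    (hind : Module.finrank ℂ (LinearMap.ker (T : X →ₗ[ℂ] Y)) = Module.finrank ℂ (Y ⧸ LinearMap.range (T : X →ₗ[ℂ] Y)))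
    (hninv : ¬ IsInvertibleOp T) :
    ∃ ν > 0, ∀ H : X →L[ℂ] Y, ‖H‖ < ν → IsInvertibleOp (T + H) →
      ∀ ε > 0, ∃ δ : ℝ, 0 < δ ∧ δ ≤ ε ∧ ∀ S : X →L[ℂ] Y, ‖S - T‖ < δ →
        ∃ z : ℂ, ‖z‖ < ε ∧ ¬ IsInvertibleOp (S + z • H) :=
  stmt8_general T hker hcoker hind hninv
end
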